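/- For nonnegative n×n matrices A and B, ‖A ∘ B‖ ≤ r_⊗((A^T ⊗ B) ∘ (B^T ⊗ A))^{1/2} ≤ r_⊗(A^T ⊗ B), where ‖·‖ is the max entry norm, ∘ the Hadamard product, ⊗ the max-algebra product, and r_⊗ the max-algebra spectral radius (maximum cycle geometric mean). -/

import Mathlib

open Filter Finset

noncomputable section

/-- Max-algebra product of matrices: `(A ⊗ B) i j = max_l A i l * B l j`. -/
def maxMul {n : ℕ} (A B : Matrix (Fin n) (Fin n) ℝ) : Matrix (Fin n) (Fin n) ℝ :=
  fun i j => ⨆ l, A i l * B l j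

/-- Max-algebra powers `A^k_⊗`. -/
def maxPow {n : ℕ} (A : Matrix (Fin n) (Fin n) ℝ) : ℕ → Matrix (Fin n) (Fin n) ℝ
  | 0 => fun i j => if i = j then 1 else 0
  | k + 1 => maxMul (maxPow A k) A

/-- Max-algebra action of a matrix on a vector: `(A ⊗ x) i = max_j A i j * x j`. -/
def maxVecMul {n : ℕ} (A : Matrix (Fin n) (Fin n) ℝ) (x : Fin n → ℝ) : Fin n → ℝ :=
  fun i => ⨆ j, A i j * x j

/-- Max norm of a vector: `‖x‖ = max_i x i`. -/
def vnorm {n : ℕ} (x : Fin n → ℝ) : ℝ := ⨆ i, x i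

/-- Max entry norm of a matrix: `‖A‖ = max_{i,j} A i j`. -/
def matNorm {n : ℕ} (A : Matrix (Fin n) (Fin n) ℝ) : ℝ := ⨆ i, ⨆ j, A i j

/-- Max-algebra local spectral radius `r_x(A) = lim_k ‖A^k_⊗ ⊗ x‖^{1/k}`
(the limit exists, so we may define it as the `limsup`). -/
def rloc {n : ℕ} (A : Matrix (Fin n) (Fin n) ℝ) (x : Fin n → ℝ) : ℝ :=
  Filter.atTop.limsup fun k : ℕ => (vnorm (maxVecMul (maxPow A k) x)) ^ ((k : ℝ)⁻¹)

/-- Classical local spectral radius `ρ_x(A) = limsup_k ‖A^k x‖^{1/k}`. -/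
def rhox {n : ℕ} (A : Matrix (Fin n) (Fin n) ℝ) (x : Fin n → ℝ) : ℝ :=
  Filter.atTop.limsup fun k : ℕ => (vnorm ((A ^ k).mulVec x)) ^ ((k : ℝ)⁻¹)

/-- Hadamard (entrywise) power `A^{(t)} = [a_{ij}^t]`. -/
def hadPow {n : ℕ} (A : Matrix (Fin n) (Fin n) ℝ) (t : ℝ) : Matrix (Fin n) (Fin n) ℝ :=
  fun i j => (A i j) ^ t

/-- The `i`-th standard basis vector. -/
def e {n : ℕ} (i : Fin n) : Fin n → ℝ := fun j => if j = i then 1 else 0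

end
/-- Max-algebra spectral radius (maximum cycle geometric mean), via the Gelfand-type
formula `r_⊗(A) = lim_j ‖A^j_⊗‖^{1/j}`. -/
noncomputable def rmax {n : ℕ} (A : Matrix (Fin n) (Fin n) ℝ) : ℝ :=
  Filter.atTop.limsup fun k : ℕ => (matNorm (maxPow A k)) ^ ((k : ℝ)⁻¹)

namespace Stmt18Aux
variable {n : ℕ}

noncomputable section

lemma le_iSup' (f : Fin n → ℝ) (i : Fin n) : f i ≤ ⨆ j, f j :=
  le_ciSup (Set.finite_range f).bddAbove i

lemma maxMul_nonneg {A B : Matrix (Fin n) (Fin n) ℝ} (hA : ∀ i j, 0 ≤ A i j)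
    (hB : ∀ i j, 0 ≤ B i j) : ∀ i j, 0 ≤ maxMul A B i j := fun i j =>
  Real.iSup_nonneg fun l => mul_nonneg (hA i l) (hB l j)

lemma maxPow_nonneg {A : Matrix (Fin n) (Fin n) ℝ} (hA : ∀ i j, 0 ≤ A i j) (k : ℕ) :
    ∀ i j, 0 ≤ maxPow A k i j := by
  induction k with
  | zero => intro i j; simp only [maxPow]; split <;> norm_num
  | succ k ih => exact maxMul_nonneg ih hA

lemma matNorm_nonneg {A : Matrix (Fin n) (Fin n) ℝ} (hA : ∀ i j, 0 ≤ A i j) :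
    0 ≤ matNorm A :=
  Real.iSup_nonneg fun i => Real.iSup_nonneg fun j => hA i j

lemma entry_le_matNorm (A : Matrix (Fin n) (Fin n) ℝ) (i j : Fin n) :
    A i j ≤ matNorm A :=
  (le_iSup' (fun j' => A i j') j).trans (le_iSup' (fun i' => ⨆ j', A i' j') i)

lemma iSup_swap (f : Fin n → Fin n → ℝ) :
    ⨆ l, ⨆ m, f l m = ⨆ m, ⨆ l, f l m := by
  rcases isEmpty_or_nonempty (Fin n) with h | h
  · simp [Real.iSup_of_isEmpty]
  · refine le_antisymm ?_ ?_
    · refine ciSup_le fun l => ciSup_le fun m => ?_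
      exact (le_iSup' (fun l' => f l' m) l).trans (le_iSup' (fun m' => ⨆ l', f l' m') m)
    · refine ciSup_le fun m => ciSup_le fun l => ?_
      exact (le_iSup' (fun m' => f l m') m).trans (le_iSup' (fun l' => ⨆ m', f l' m') l)

lemma maxMul_assoc {A B C : Matrix (Fin n) (Fin n) ℝ} (hA : ∀ i j, 0 ≤ A i j)
    (hC : ∀ i j, 0 ≤ C i j) : maxMul (maxMul A B) C = maxMul A (maxMul B C) := by
  funext i j
  simp only [maxMul]
  have h1 : ∀ l, (⨆ m, A i m * B m l) * C l j = ⨆ m, A i m * B m l * C l j := fun l =>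
    Real.iSup_mul_of_nonneg (hC l j) _
  have h2 : ∀ m, A i m * (⨆ l, B m l * C l j) = ⨆ l, A i m * (B m l * C l j) := fun m =>
    Real.mul_iSup_of_nonneg (hA i m) _
  simp only [h1, h2, mul_assoc]
  exact iSup_swap fun l m => A i m * (B m l * C l j)

lemma maxMul_one {A : Matrix (Fin n) (Fin n) ℝ} (hA : ∀ i j, 0 ≤ A i j) :
    maxMul A (maxPow A 0) = A := by
  funext i j
  simp only [maxMul, maxPow]
  refine le_antisymm (Real.iSup_le (fun l => ?_) (hA i j)) ?_
  · by_cases h : l = j <;> simp [h, hA]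
  · have := le_iSup' (fun l => A i l * if l = j then 1 else 0) j
    simpa using this

lemma one_maxMul {A : Matrix (Fin n) (Fin n) ℝ} (hA : ∀ i j, 0 ≤ A i j) :
    maxMul (maxPow A 0) A = A := by
  funext i j
  simp only [maxMul, maxPow]
  refine le_antisymm (Real.iSup_le (fun l => ?_) (hA i j)) ?_
  · by_cases h : i = l <;> simp [h, hA]
  · have := le_iSup' (fun l => (if i = l then (1:ℝ) else 0) * A l j) i
    simpa using this

lemma maxPow_succ' {A : Matrix (Fin n) (Fin n) ℝ} (hA : ∀ i j, 0 ≤ A i j) (k : ℕ) :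
    maxPow A (k + 1) = maxMul A (maxPow A k) := by
  induction k with
  | zero => show maxMul (maxPow A 0) A = maxMul A (maxPow A 0)
            rw [maxMul_one hA, one_maxMul hA]
  | succ k ih =>
      show maxMul (maxPow A (k+1)) A = maxMul A (maxPow A (k+1))
      conv_lhs => rw [ih]
      rw [maxMul_assoc hA hA]
      rfl

lemma matNorm_maxPow_le {A : Matrix (Fin n) (Fin n) ℝ} (hA : ∀ i j, 0 ≤ A i j) (k : ℕ) :
    matNorm (maxPow A (k + 1)) ≤ matNorm A ^ (k + 1) := by
  induction k with
  | zero =>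
      refine Real.iSup_le (fun i => Real.iSup_le (fun j => ?_) ?_) ?_
      · have : maxPow A 1 i j = ⨆ l, maxPow A 0 i l * A l j := rfl
        rw [show maxPow A 1 = A from by rw [show maxPow A 1 = maxMul (maxPow A 0) A from rfl, one_maxMul hA]]
        simpa using entry_le_matNorm A i j
      all_goals simpa using matNorm_nonneg hA
  | succ k ih =>
      refine Real.iSup_le (fun i => Real.iSup_le (fun j => ?_) ?_) ?_
      · have hk1 : ∀ i j, maxPow A (k+1) i j ≤ matNorm A ^ (k+1) := fun i j =>
          (entry_le_matNorm _ i j).trans ih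
        refine Real.iSup_le (fun l => ?_) (pow_nonneg (matNorm_nonneg hA) _)
        calc maxPow A (k+1) i l * A l j
            ≤ matNorm A ^ (k+1) * matNorm A :=
              mul_le_mul (hk1 i l) (entry_le_matNorm A l j) (hA l j)
                (pow_nonneg (matNorm_nonneg hA) _)
          _ = matNorm A ^ (k+2) := by ring
      all_goals exact pow_nonneg (matNorm_nonneg hA) _

lemma diag_pow_le {M : Matrix (Fin n) (Fin n) ℝ} (hM : ∀ i j, 0 ≤ M i j) (j : Fin n) (k : ℕ) :
    M j j ^ k ≤ maxPow M k j j := by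
  induction k with
  | zero => simp [maxPow]
  | succ k ih =>
      have : maxPow M k j j * M j j ≤ maxPow M (k+1) j j :=
        le_iSup' (fun l => maxPow M k j l * M l j) j
      calc M j j ^ (k+1) = M j j ^ k * M j j := by ring
        _ ≤ maxPow M k j j * M j j := mul_le_mul_of_nonneg_right ih (hM j j)
        _ ≤ _ := this

noncomputable def useq (M : Matrix (Fin n) (Fin n) ℝ) (k : ℕ) : ℝ :=
  (matNorm (maxPow M k)) ^ ((k : ℝ)⁻¹)

lemma useq_nonneg {M : Matrix (Fin n) (Fin n) ℝ} (hM : ∀ i j, 0 ≤ M i j) (k : ℕ) :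
    0 ≤ useq M k := Real.rpow_nonneg (matNorm_nonneg (maxPow_nonneg hM k)) _

lemma useq_bounded {M : Matrix (Fin n) (Fin n) ℝ} (hM : ∀ i j, 0 ≤ M i j) (k : ℕ) :
    useq M k ≤ max (matNorm M) 1 := by
  cases k with
  | zero => simp [useq, le_max_right]
  | succ k =>
      have h0 : (0:ℝ) ≤ matNorm M := matNorm_nonneg hM
      have h1 : useq M (k+1) ≤ (matNorm M ^ (k+1)) ^ (((k+1 : ℕ) : ℝ)⁻¹) :=
        Real.rpow_le_rpow (matNorm_nonneg (maxPow_nonneg hM _))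
          (matNorm_maxPow_le hM k) (by positivity)
      have h2 : (matNorm M ^ (k+1)) ^ (((k+1 : ℕ) : ℝ)⁻¹) = matNorm M := by
        rw [← Real.rpow_natCast (matNorm M) (k+1), ← Real.rpow_mul h0,
          mul_inv_cancel₀ (by positivity), Real.rpow_one]
      exact h1.trans_eq h2 |>.trans (le_max_left _ _)

lemma isBounded_useq {M : Matrix (Fin n) (Fin n) ℝ} (hM : ∀ i j, 0 ≤ M i j) :
    Filter.atTop.IsBoundedUnder (· ≤ ·) (useq M) :=
  Filter.isBoundedUnder_of ⟨max (matNorm M) 1, useq_bounded hM⟩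

lemma isCobounded_useq {M : Matrix (Fin n) (Fin n) ℝ} (hM : ∀ i j, 0 ≤ M i j) :
    Filter.atTop.IsCoboundedUnder (· ≤ ·) (useq M) :=
  Filter.IsBoundedUnder.isCoboundedUnder_le
    (Filter.isBoundedUnder_of ⟨0, fun k => useq_nonneg hM k⟩)

noncomputable def rmax' (M : Matrix (Fin n) (Fin n) ℝ) : ℝ := Filter.atTop.limsup (useq M)

lemma rmax_nonneg {M : Matrix (Fin n) (Fin n) ℝ} (hM : ∀ i j, 0 ≤ M i j) :
    0 ≤ rmax' M :=
  Filter.le_limsup_of_frequently_le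
    (Filter.Frequently.of_forall fun k => useq_nonneg hM k) (isBounded_useq hM)

lemma diag_le_rmax {M : Matrix (Fin n) (Fin n) ℝ} (hM : ∀ i j, 0 ≤ M i j) (j : Fin n) :
    M j j ≤ rmax' M := by
  refine Filter.le_limsup_of_frequently_le ?_ (isBounded_useq hM)
  refine Filter.Eventually.frequently ?_
  filter_upwards [Filter.eventually_ge_atTop 1] with k hk
  have h1 : M j j ^ k ≤ matNorm (maxPow M k) :=
    (diag_pow_le hM j k).trans (entry_le_matNorm _ j j)
  have h2 : (M j j ^ k) ^ ((k : ℝ)⁻¹) ≤ useq M k :=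
    Real.rpow_le_rpow (pow_nonneg (hM j j) k) h1 (by positivity)
  have h3 : (M j j ^ k) ^ ((k : ℝ)⁻¹) = M j j := by
    rw [← Real.rpow_natCast (M j j) k, ← Real.rpow_mul (hM j j),
      mul_inv_cancel₀ (by exact_mod_cast Nat.one_le_iff_ne_zero.mp hk), Real.rpow_one]
  exact h3 ▸ h2

lemma hadamard_pow_le {C : Matrix (Fin n) (Fin n) ℝ} (hC : ∀ i j, 0 ≤ C i j) (k : ℕ) :
    ∀ i j, maxPow (fun i j => C i j * C j i) k i j ≤ maxPow C k i j * maxPow C k j i := by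
  set E : Matrix (Fin n) (Fin n) ℝ := fun i j => C i j * C j i with hEdef
  have hE : ∀ i j, 0 ≤ E i j := fun i j => mul_nonneg (hC i j) (hC j i)
  induction k with
  | zero =>
      intro i j
      by_cases h : i = j <;> simp [maxPow, h]
  | succ k ih =>
      intro i j
      have hP := maxPow_nonneg hC
      refine Real.iSup_le (fun l => ?_)
        (mul_nonneg (hP (k+1) i j) (hP (k+1) j i))
      have t1 : maxPow C k i l * C l j ≤ maxPow C (k+1) i j :=
        le_iSup' (fun m => maxPow C k i m * C m j) l
      have t2 : C j l * maxPow C k l i ≤ maxPow C (k+1) j i := by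
        rw [maxPow_succ' hC]
        exact le_iSup' (fun m => C j m * maxPow C k m i) l
      calc maxPow E k i l * E l j
          ≤ (maxPow C k i l * maxPow C k l i) * (C l j * C j l) :=
            mul_le_mul (ih i l) le_rfl (hE l j)
              (mul_nonneg (hP k i l) (hP k l i))
        _ = (maxPow C k i l * C l j) * (C j l * maxPow C k l i) := by ring
        _ ≤ maxPow C (k+1) i j * maxPow C (k+1) j i :=
            mul_le_mul t1 t2 (mul_nonneg (hC j l) (hP k l i)) (hP (k+1) i j)

lemma rmax_pow_half_le {C : Matrix (Fin n) (Fin n) ℝ} (hC : ∀ i j, 0 ≤ C i j) :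
    (rmax' (fun i j => C i j * C j i)) ^ ((2:ℝ)⁻¹) ≤ rmax' C := by
  set E : Matrix (Fin n) (Fin n) ℝ := fun i j => C i j * C j i with hEdef
  have hE : ∀ i j, 0 ≤ E i j := fun i j => mul_nonneg (hC i j) (hC j i)
  have hL0 : 0 ≤ rmax' C := rmax_nonneg hC
  have hnorm : ∀ k, matNorm (maxPow E k) ≤ matNorm (maxPow C k) * matNorm (maxPow C k) := by
    intro k
    have hb : 0 ≤ matNorm (maxPow C k) := matNorm_nonneg (maxPow_nonneg hC k)
    refine Real.iSup_le (fun i => Real.iSup_le (fun j => ?_) (by positivity)) (by positivity)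
    calc maxPow E k i j ≤ maxPow C k i j * maxPow C k j i := hadamard_pow_le hC k i j
      _ ≤ matNorm (maxPow C k) * matNorm (maxPow C k) :=
          mul_le_mul (entry_le_matNorm _ i j) (entry_le_matNorm _ j i)
            (maxPow_nonneg hC k j i) hb
  have huv : ∀ k, useq E k ≤ useq C k * useq C k := by
    intro k
    have h1 : useq E k ≤ (matNorm (maxPow C k) * matNorm (maxPow C k)) ^ ((k : ℝ)⁻¹) :=
      Real.rpow_le_rpow (matNorm_nonneg (maxPow_nonneg hE k)) (hnorm k) (by positivity)
    rw [Real.mul_rpow (matNorm_nonneg (maxPow_nonneg hC k))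
      (matNorm_nonneg (maxPow_nonneg hC k))] at h1
    exact h1
  refine le_of_forall_gt_imp_ge_of_dense fun a ha => ?_
  have ha0 : 0 ≤ a := hL0.trans ha.le
  have hev : ∀ᶠ k in Filter.atTop, useq C k < a :=
    Filter.eventually_lt_of_limsup_lt ha (isBounded_useq hC)
  have hev2 : ∀ᶠ k in Filter.atTop, useq E k ≤ a * a := by
    filter_upwards [hev] with k hk
    exact (huv k).trans (mul_le_mul hk.le hk.le (useq_nonneg hC k) ha0)
  have hlim : rmax' E ≤ a * a := Filter.limsup_le_of_le (isCobounded_useq hE) hev2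
  calc (rmax' E) ^ ((2:ℝ)⁻¹) ≤ (a * a) ^ ((2:ℝ)⁻¹) :=
        Real.rpow_le_rpow (rmax_nonneg hE) hlim (by norm_num)
    _ = a := by
        rw [show a * a = a ^ ((2:ℕ):ℝ) from by rw [Real.rpow_natCast]; ring,
          ← Real.rpow_mul ha0]
        norm_num

end
end Stmt18Aux

/-- `‖A ∘ B‖ ≤ r_⊗((Aᵀ ⊗ B) ∘ (Bᵀ ⊗ A))^{1/2} ≤ r_⊗(Aᵀ ⊗ B)`. -/
theorem stmt18 {n : ℕ} (A B : Matrix (Fin n) (Fin n) ℝ)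
    (hA : ∀ i j, 0 ≤ A i j) (hB : ∀ i j, 0 ≤ B i j) :
    matNorm (fun i j => A i j * B i j) ≤
      (rmax (fun i j => maxMul A.transpose B i j * maxMul B.transpose A i j)) ^ ((2 : ℝ)⁻¹) ∧
    (rmax (fun i j => maxMul A.transpose B i j * maxMul B.transpose A i j)) ^ ((2 : ℝ)⁻¹) ≤
      rmax (maxMul A.transpose B) := by
  classical
  set C : Matrix (Fin n) (Fin n) ℝ := maxMul A.transpose B with hCdef
  have hC : ∀ i j, 0 ≤ C i j :=
    Stmt18Aux.maxMul_nonneg (fun i j => hA j i) hB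
  set E : Matrix (Fin n) (Fin n) ℝ := fun i j => C i j * C j i with hEdef
  have hE : ∀ i j, 0 ≤ E i j := fun i j => mul_nonneg (hC i j) (hC j i)
  have hswap : (fun i j => maxMul A.transpose B i j * maxMul B.transpose A i j) = E := by
    funext i j
    show maxMul A.transpose B i j * maxMul B.transpose A i j = C i j * C j i
    congr 1
    show (⨆ l, B.transpose i l * A l j) = ⨆ l, A.transpose j l * B l i
    exact iSup_congr fun l => mul_comm _ _
  have hrmaxE : rmax (fun i j => maxMul A.transpose B i j * maxMul B.transpose A i j)
      = Stmt18Aux.rmax' E := by rw [hswap]; rfl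
  have hrmaxC : rmax (maxMul A.transpose B) = Stmt18Aux.rmax' C := rfl
  have hrE0 : 0 ≤ Stmt18Aux.rmax' E := Stmt18Aux.rmax_nonneg hE
  constructor
  · rw [hrmaxE]
    refine Real.iSup_le (fun i => Real.iSup_le (fun j => ?_)
      (Real.rpow_nonneg hrE0 _)) (Real.rpow_nonneg hrE0 _)
    have hx0 : 0 ≤ A i j * B i j := mul_nonneg (hA i j) (hB i j)
    have h1 : A i j * B i j ≤ C j j := by
      have := Stmt18Aux.le_iSup' (fun l => A.transpose j l * B l j) i
      exact this
    have h2 : (A i j * B i j) * (A i j * B i j) ≤ E j j :=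
      mul_le_mul h1 h1 hx0 (hC j j)
    have h3 : E j j ≤ Stmt18Aux.rmax' E := Stmt18Aux.diag_le_rmax hE j
    calc A i j * B i j
        = ((A i j * B i j) * (A i j * B i j)) ^ ((2:ℝ)⁻¹) := by
          rw [show (A i j * B i j) * (A i j * B i j) = (A i j * B i j) ^ ((2:ℕ):ℝ) from by
            rw [Real.rpow_natCast]; ring, ← Real.rpow_mul hx0]
          norm_num
      _ ≤ (Stmt18Aux.rmax' E) ^ ((2:ℝ)⁻¹) :=
          Real.rpow_le_rpow (by positivity) (h2.trans h3) (by norm_num)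
  · rw [hrmaxE, hrmaxC]
    exact Stmt18Aux.rmax_pow_half_le hC
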